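/- For all positive integers s and H, there exists an n such that the hat guessing game on the star K_{1,n} is winning, where the center A has hatness H and makes s guesses, and each of the n leaves has hatness s+1 and makes 1 guess. (In fact n = H^{s+1} suffices.) -/
import Mathlib


/-- A winning strategy in the hat guessing game `⟨G, h, g⟩`: each sage `v` deterministically
outputs at most `g v` guesses depending only on the hat colors of its neighbors, and for
every hat assignment (with `c v < h v`) some sage's guess set contains its own color. -/
def HatWinning {V : Type*} (G : SimpleGraph V) (h g : V → ℕ) : Prop :=
  ∃ σ : V → (V → ℕ) → Finset ℕ,
    (∀ v c c', (∀ u, G.Adj v u → c u = c' u) → σ v c = σ v c') ∧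
    (∀ v c, (σ v c).card ≤ g v) ∧
    ∀ c : V → ℕ, (∀ v, c v < h v) → ∃ v, c v ∈ σ v c

/-- The hat guessing game played by the sages occupying the vertices of `S` only
(the game on the induced subgraph `G[S]`). -/
def HatWinningOn {V : Type*} (G : SimpleGraph V) (S : Set V) (h g : V → ℕ) : Prop :=
  ∃ σ : V → (V → ℕ) → Finset ℕ,
    (∀ v ∈ S, ∀ c c', (∀ u ∈ S, G.Adj v u → c u = c' u) → σ v c = σ v c') ∧
    (∀ v ∈ S, ∀ c, (σ v c).card ≤ g v) ∧
    ∀ c : V → ℕ, (∀ v ∈ S, c v < h v) → ∃ v ∈ S, c v ∈ σ v c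

/-- The star `K_{1,n}`: center `0 : Fin (n+1)` adjacent to the `n` other vertices (the leaves). -/
def starGraph (n : ℕ) : SimpleGraph (Fin (n + 1)) :=
  SimpleGraph.fromRel (fun x _ => x = 0)

open scoped Classical

namespace StarAux

noncomputable def e (s H : ℕ) : (Fin (s+1) → Fin H) ≃ Fin (H ^ (s+1)) :=
  Fintype.equivFinOfCardEq (by simp [Fintype.card_fun])

noncomputable def f (s H : ℕ) (t : Fin (s+1) → Fin H) (a : ℕ) : ℕ :=
  if h : ∃ i, (t i : ℕ) = a then h.choose.val else 0

lemma f_eq (s H : ℕ) (t : Fin (s+1) → Fin H) (ht : Function.Injective t)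
    (i : Fin (s+1)) : f s H t (t i) = i := by
  have h : ∃ j, (t j : ℕ) = ((t i : Fin H) : ℕ) := ⟨i, rfl⟩
  simp only [f, dif_pos h]
  have h2 : t h.choose = t i := Fin.ext h.choose_spec
  rw [ht h2]

/-- set of candidate center colors: those not guessed by any leaf. -/
noncomputable def Bset (s H : ℕ) (c : Fin (H ^ (s+1) + 1) → ℕ) : Finset ℕ :=
  (Finset.range H).filter fun a => ∀ m : Fin (H ^ (s+1)), f s H ((e s H).symm m) a ≠ c m.succ

noncomputable def σ (s H : ℕ) (v : Fin (H ^ (s+1) + 1)) (c : Fin (H ^ (s+1) + 1) → ℕ) :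
    Finset ℕ :=
  if h : v = 0 then (if (Bset s H c).card ≤ s then Bset s H c else ∅)
  else {f s H ((e s H).symm ⟨v.val - 1, by
    have h1 : v.val ≠ 0 := fun hv0 => h (Fin.ext (by simp [hv0]))
    have := v.isLt; omega⟩) (c 0)}

lemma Bset_card (s H : ℕ) (c : Fin (H ^ (s+1) + 1) → ℕ)
    (hc : ∀ m : Fin (H ^ (s+1)), c m.succ < s + 1) : (Bset s H c).card ≤ s := by
  by_contra hB
  push_neg at hB
  obtain ⟨C, hCB, hCcard⟩ := Finset.exists_subset_card_eq hB
  let o := C.orderIsoOfFin hCcard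
  have hmem : ∀ i : Fin (s+1), ((o i : ℕ)) ∈ Bset s H c := fun i => hCB (o i).2
  have hlt : ∀ i : Fin (s+1), ((o i : ℕ)) < H := fun i => by
    have := hmem i
    simp only [Bset, Finset.mem_filter, Finset.mem_range] at this
    exact this.1
  set t : Fin (s+1) → Fin H := fun i => ⟨(o i : ℕ), hlt i⟩ with ht
  have htinj : Function.Injective t := by
    intro i j hij
    exact o.injective (Subtype.ext (congrArg Fin.val hij))
  set m := e s H t with hm
  have hct : c m.succ < s + 1 := hc m
  set i : Fin (s+1) := ⟨c m.succ, hct⟩ with hi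
  have hBi := hmem i
  simp only [Bset, Finset.mem_filter, Finset.mem_range] at hBi
  have := hBi.2 m
  rw [hm, Equiv.symm_apply_apply] at this
  have h2 : ((t i : Fin H) : ℕ) = (o i : ℕ) := rfl
  rw [← h2, f_eq s H t htinj i] at this
  exact this rfl

lemma adj_iff (n : ℕ) (x y : Fin (n+1)) :
    (starGraph n).Adj x y ↔ x ≠ y ∧ (x = 0 ∨ y = 0) := by
  simp [starGraph, SimpleGraph.fromRel_adj]

lemma main (s H : ℕ) :
    HatWinning (starGraph (H ^ (s + 1)))
      (fun x => if x = 0 then H else s + 1) (fun x => if x = 0 then s else 1) := by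
  refine ⟨σ s H, ?_, ?_, ?_⟩
  · -- locality
    intro v c c' hcc
    by_cases hv : v = 0
    · subst hv
      have hleaf : ∀ m : Fin (H ^ (s+1)), c m.succ = c' m.succ := by
        intro m
        apply hcc
        rw [adj_iff]
        exact ⟨(Fin.succ_ne_zero m).symm, Or.inl rfl⟩
      simp only [σ, dif_pos rfl]
      have hBB : Bset s H c = Bset s H c' := by
        unfold Bset
        apply Finset.filter_congr
        intro a _
        simp only [hleaf]
      rw [hBB]
      simp
    · have h0 : c 0 = c' 0 := by
        apply hcc
        rw [adj_iff]
        exact ⟨hv, Or.inr rfl⟩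
      simp only [σ, dif_neg hv, h0]
  · -- guess number bounds
    intro v c
    by_cases hv : v = 0
    · subst hv
      have hσ : σ s H 0 c = if (Bset s H c).card ≤ s then Bset s H c else ∅ := by
        simp [σ]
      rw [hσ]
      split <;> simp_all
    · simp only [σ, dif_neg hv, if_neg hv]
      simp
  · -- winning
    intro c hc
    by_cases hex : ∃ m : Fin (H ^ (s+1)), f s H ((e s H).symm m) (c 0) = c m.succ
    · obtain ⟨m, hm⟩ := hex
      refine ⟨m.succ, ?_⟩
      have hne : m.succ ≠ 0 := Fin.succ_ne_zero m
      simp only [σ, dif_neg hne, Finset.mem_singleton]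
      have hidx : (⟨m.succ.val - 1, by simp [Fin.val_succ]⟩ :
          Fin (H ^ (s+1))) = m := by
        ext
        simp [Fin.val_succ]
      rw [hidx]
      exact hm.symm
    · push_neg at hex
      refine ⟨0, ?_⟩
      have hc0 : c 0 < H := by simpa using hc 0
      have hcleaf : ∀ m : Fin (H ^ (s+1)), c m.succ < s + 1 := by
        intro m
        have := hc m.succ
        simpa [Fin.succ_ne_zero m] using this
      have hBc : c 0 ∈ Bset s H c := by
        simp only [Bset, Finset.mem_filter, Finset.mem_range]
        exact ⟨hc0, hex⟩
      have hcard := Bset_card s H c hcleaf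
      simp only [σ, dif_pos rfl, if_pos hcard]
      exact hBc

end StarAux

/-- For all positive `s` and `H` there is `n` such that the game on `K_{1,n}`
with center hatness `H` and `s` guesses, leaf hatness `s+1` and `1` guess, is winning;
in fact `n = H^(s+1)` suffices. -/
theorem star_winning (s H : ℕ) (hs : 0 < s) (hH : 0 < H) :
    (∃ n : ℕ, HatWinning (starGraph n)
      (fun x => if x = 0 then H else s + 1) (fun x => if x = 0 then s else 1)) ∧
    HatWinning (starGraph (H ^ (s + 1)))
      (fun x => if x = 0 then H else s + 1) (fun x => if x = 0 then s else 1) := by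
  exact ⟨⟨H ^ (s + 1), StarAux.main s H⟩, StarAux.main s H⟩
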